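/- arXiv:2604.11519 — 2 statements merged into one kernel-verified Lean document; each statement's English description precedes it below -/
import Mathlib

section
/- Let p and q be two probability densities on a measurable set Ω with 0 < p(x), q(x) < C for all x ∈ Ω, where C > 0. Then ∫_Ω |p(x) − q(x)|² dx ≤ (2C/(1 − log 2)) · D_KL(p‖q), where D_KL(p‖q) = ∫_Ω p(x) log(p(x)/q(x)) dx. -/
/-!
Write `t = p / q`. The integrand `p log (p / q) - p + q` equals `q · klFun t`, and it integrates
to `D_KL(p‖q)` because `p` and `q` both have mass one. Comparing derivatives on either side of
`t = 1` gives `(t - 1)² ≤ 2 max(t, 1) klFun t`, that is,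
`(p - q)² ≤ 2 max(p, q) (p log (p / q) - p + q)`, and `max(p, q) < C` on `Ω`;
integrating this pointwise bound proves the claim.
-/

open MeasureTheory Real Set InformationTheory

lemma sq_sub_one_le_two_mul_klFun {t : ℝ} (ht₀ : 0 ≤ t) (ht₁ : t ≤ 1) :
    (t - 1) ^ 2 ≤ 2 * klFun t := by
  let g : ℝ → ℝ := fun s ↦ 2 * klFun s - (s - 1) ^ 2
  have hg : AntitoneOn g (Icc 0 1) := by
    refine antitoneOn_of_hasDerivWithinAt_nonpos (convex_Icc 0 1) (by fun_prop)
      (f' := fun s ↦ 2 * log s - 2 * (s - 1)) (fun s hs ↦ ?_) (fun s hs ↦ ?_)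
    · rw [interior_Icc] at hs
      have := ((hasDerivAt_klFun hs.1.ne').const_mul 2).sub ((hasDerivAt_id s).sub_const 1 |>.pow 2)
      exact (this.congr_deriv (by simp)).hasDerivWithinAt
    · rw [interior_Icc] at hs
      linarith [log_le_sub_one_of_pos hs.1]
  have := hg ⟨ht₀, ht₁⟩ ⟨zero_le_one, le_rfl⟩ ht₁
  simp only [g, klFun_one] at this
  linarith

lemma sq_sub_one_le_two_mul_mul_klFun {t : ℝ} (ht : 1 ≤ t) :
    (t - 1) ^ 2 ≤ 2 * t * klFun t := by
  let g : ℝ → ℝ := fun s ↦ 2 * s * klFun s - (s - 1) ^ 2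
  have hg : MonotoneOn g (Ici 1) := by
    refine monotoneOn_of_hasDerivWithinAt_nonneg (convex_Ici 1) (by fun_prop)
      (f' := fun s ↦ 4 * klFun s) (fun s hs ↦ ?_) (fun s hs ↦ ?_)
    · rw [interior_Ici] at hs
      have := (((hasDerivAt_id s).const_mul 2).mul (hasDerivAt_klFun (by linarith [hs.out]))).sub
        ((hasDerivAt_id s).sub_const 1 |>.pow 2)
      refine (this.congr_deriv ?_).hasDerivWithinAt
      simp only [mul_one, klFun_apply, id_eq, Nat.cast_ofNat, Nat.add_one_sub_one, pow_one]
      ring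
    · rw [interior_Ici] at hs
      linarith [klFun_nonneg (zero_le_one.trans hs.out.le)]
  have := hg self_mem_Ici ht ht
  simp only [g, klFun_one] at this
  linarith

lemma sq_sub_one_le_two_mul_max_mul_klFun {t : ℝ} (ht : 0 ≤ t) :
    (t - 1) ^ 2 ≤ 2 * max t 1 * klFun t := by
  rcases le_total t 1 with ht₁ | ht₁
  · simpa [max_eq_right ht₁] using sq_sub_one_le_two_mul_klFun ht ht₁
  · simpa [max_eq_left ht₁] using sq_sub_one_le_two_mul_mul_klFun ht₁

lemma sq_sub_le_two_mul_max_mul {a b : ℝ} (ha : 0 ≤ a) (hb : 0 < b) :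
    (a - b) ^ 2 ≤ 2 * max a b * (a * log (a / b) - a + b) := by
  have hkl : a * log (a / b) - a + b = b * klFun (a / b) := by
    rw [klFun_apply]; field_simp; ring
  have hmax : max a b = b * max (a / b) 1 := by
    rw [mul_max_of_nonneg _ _ hb.le, mul_div_cancel₀ _ hb.ne', mul_one]
  calc (a - b) ^ 2 = b ^ 2 * (a / b - 1) ^ 2 := by field_simp
    _ ≤ b ^ 2 * (2 * max (a / b) 1 * klFun (a / b)) := by
        gcongr; exact sq_sub_one_le_two_mul_max_mul_klFun (div_nonneg ha hb.le)
    _ = 2 * max a b * (a * log (a / b) - a + b) := by rw [hkl, hmax]; ring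

theorem sq_L2_le_KL_general
    {d : ℕ} (Ω : Set (EuclideanSpace ℝ (Fin d))) (hΩ : MeasurableSet Ω)
    (p q : EuclideanSpace ℝ (Fin d) → ℝ) (C : ℝ)
    (hp_pos : ∀ x ∈ Ω, 0 < p x) (hq_pos : ∀ x ∈ Ω, 0 < q x)
    (hp_lt : ∀ x ∈ Ω, p x < C) (hq_lt : ∀ x ∈ Ω, q x < C)
    (hp_prob : ∫ x in Ω, p x = 1) (hq_prob : ∫ x in Ω, q x = 1)
    (hKL_int : IntegrableOn (fun x => p x * Real.log (p x / q x)) Ω) :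
    ∫ x in Ω, |p x - q x| ^ 2
      ≤ (2 * C / (1 - Real.log 2)) * ∫ x in Ω, p x * Real.log (p x / q x) := by
  have hp_int : IntegrableOn p Ω := Integrable.of_integral_ne_zero (by simp [hp_prob])
  have hq_int : IntegrableOn q Ω := Integrable.of_integral_ne_zero (by simp [hq_prob])
  let h x := p x * log (p x / q x) - p x + q x
  have hh_int : IntegrableOn h Ω := (hKL_int.sub hp_int).add hq_int
  have hh_integral : ∫ x in Ω, h x = ∫ x in Ω, p x * log (p x / q x) := by
    rw [integral_add (f := fun x ↦ p x * log (p x / q x) - p x) (hKL_int.sub hp_int) hq_int,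
      integral_sub hKL_int hp_int, hp_prob, hq_prob]
    ring
  have hpointwise : ∀ x ∈ Ω, |p x - q x| ^ 2 ≤ 2 * C / (1 - log 2) * h x := by
    intro x hx
    have hsq := sq_sub_le_two_mul_max_mul (hp_pos x hx).le (hq_pos x hx)
    have hmax : max (p x) (q x) ≤ C := max_le (hp_lt x hx).le (hq_lt x hx).le
    have hC : 0 ≤ C := (hp_pos x hx).le.trans (hp_lt x hx).le
    have hh : 0 ≤ h x := nonneg_of_mul_nonneg_right (hsq.trans' (sq_nonneg _))
      (mul_pos two_pos (lt_max_of_lt_right (hq_pos x hx)))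
    rw [sq_abs]
    calc (p x - q x) ^ 2 ≤ 2 * max (p x) (q x) * h x := hsq
      _ ≤ 2 * C * h x := by gcongr
      _ ≤ 2 * C / (1 - log 2) * h x := by
        gcongr
        exact le_div_self (by positivity) (by linarith [log_two_lt_d9])
          (by linarith [log_pos one_lt_two])
  calc ∫ x in Ω, |p x - q x| ^ 2 ≤ ∫ x in Ω, 2 * C / (1 - log 2) * h x :=
        integral_mono_of_nonneg (.of_forall fun _ ↦ by positivity) (hh_int.const_mul _)
          (ae_restrict_of_forall_mem hΩ hpointwise)
    _ = 2 * C / (1 - log 2) * ∫ x in Ω, p x * log (p x / q x) := by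
        rw [integral_const_mul, hh_integral]

/-- L²–KL comparison lemma: for probability densities `p, q` on a measurable set `Ω`,
bounded above by `C` and strictly positive, the squared L² distance is controlled by
the Kullback–Leibler divergence. -/
theorem sq_L2_le_KL
    {d : ℕ} (Ω : Set (EuclideanSpace ℝ (Fin d))) (hΩ : MeasurableSet Ω)
    (p q : EuclideanSpace ℝ (Fin d) → ℝ) (C : ℝ) (hC : 0 < C)
    (hp_meas : Measurable p) (hq_meas : Measurable q)
    (hp_pos : ∀ x ∈ Ω, 0 < p x) (hq_pos : ∀ x ∈ Ω, 0 < q x)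
    (hp_lt : ∀ x ∈ Ω, p x < C) (hq_lt : ∀ x ∈ Ω, q x < C)
    (hp_prob : ∫ x in Ω, p x = 1) (hq_prob : ∫ x in Ω, q x = 1)
    (hKL_int : IntegrableOn (fun x => p x * Real.log (p x / q x)) Ω) :
    ∫ x in Ω, |p x - q x| ^ 2
      ≤ (2 * C / (1 - Real.log 2)) * ∫ x in Ω, p x * Real.log (p x / q x) :=
  sq_L2_le_KL_general Ω hΩ p q C hp_pos hq_pos hp_lt hq_lt hp_prob hq_prob hKL_int
end

section
/- Let A, B : [0,1] → ℝ be C² with bounded derivatives, let τ_k = k/K, Δτ = 1/K, and τ_{k−1/2} = (τ_{k−1} + τ_k)/2. Suppose random estimators Â_j, B̂_k satisfy E|Â_j − A(τ_j)|² ≤ C_A² /N, E|B̂_k − B̃_k|² ≤ C_B²/N with |B̃_k − B(τ_{k−1/2})| ≤ C(Δτ)², and sup_j E|Â_j|² + sup_k E|B̂_k|² ≤ C. Then E|Σ_{k=1}^K ((Â_k + Â_{k−1})/2) B̂_k Δτ − ∫₀¹ A(τ)B(τ) dτ| = O(K^{−2}) + O(N^{−1/2}). -/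
/-!
The error splits into a Monte Carlo part and a quadrature part. On the `k`-th cell
`(Â_k + Â_{k-1})/2 · B̂_k - (A_k + A_{k-1})/2 · B̃_k`
`  = ((Â_k - A_k) + (Â_{k-1} - A_{k-1}))/2 · B̂_k + (A_k + A_{k-1})/2 · (B̂_k - B̃_k)`,
so Cauchy–Schwarz bounds its first absolute moment by `(C_A √C + M C_B)/√N`; the `K` cells carry
weight `1/K` each. For the quadrature part, `(A_k + A_{k-1})/2 · B̃_k Δτ` is within `O(Δτ³)` of the
integral of `A B` over the cell: the trapezoid average and `B̃_k` are within `O(Δτ²)` of the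
midpoint values (for the average, the first-order Taylor terms on the two sides cancel), and the
midpoint rule for `A B` is third-order accurate by the same cancellation. Summing over the `K`
cells gives `O(K⁻²)`.
-/

open MeasureTheory Set

section Calculus

variable {f : ℝ → ℝ} {L : ℝ}

theorem abs_sub_sub_deriv_mul_le (hf : ContDiff ℝ 2 f) {s : Set ℝ} (hs : Convex ℝ s)
    (hL : ∀ t ∈ s, |iteratedDeriv 2 f t| ≤ L) {x y : ℝ} (hx : x ∈ s) (hy : y ∈ s) :
    |f y - f x - deriv f x * (y - x)| ≤ L * (y - x) ^ 2 := by
  have hf' : Differentiable ℝ (deriv f) := by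
    simpa using hf.differentiable_iteratedDeriv 1 (by norm_num)
  have hL0 : 0 ≤ L := (abs_nonneg _).trans (hL x hx)
  have hlip : ∀ t ∈ s, |deriv f t - deriv f x| ≤ L * |t - x| := fun t ht => by
    refine hs.norm_image_sub_le_of_norm_deriv_le (fun u _ => hf' u) (fun u hu => ?_) hx ht
    simpa [iteratedDeriv_succ] using hL u hu
  have hxy : uIcc x y ⊆ s := by
    rw [← segment_eq_uIcc]; exact hs.segment_subset hx hy
  have hderiv : ∀ t, HasDerivAt (fun t => f t - deriv f x * t) (deriv f t - deriv f x) t :=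
    fun t =>
      ((hf.differentiable (by norm_num)) t).hasDerivAt.fun_sub
        (by simpa using (hasDerivAt_id t).const_mul (deriv f x))
  have key := (convex_uIcc x y).norm_image_sub_le_of_norm_deriv_le
    (f := fun t => f t - deriv f x * t) (C := L * |y - x|)
    (fun t _ => (hderiv t).differentiableAt)
    (fun t ht => by
      rw [(hderiv t).deriv, Real.norm_eq_abs]
      exact (hlip t (hxy ht)).trans (mul_le_mul_of_nonneg_left (abs_sub_left_of_mem_uIcc ht) hL0))
    left_mem_uIcc right_mem_uIcc
  calc |f y - f x - deriv f x * (y - x)| = ‖f y - deriv f x * y - (f x - deriv f x * x)‖ := by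
        rw [Real.norm_eq_abs]; ring_nf
    _ ≤ L * |y - x| * ‖y - x‖ := key
    _ = L * (y - x) ^ 2 := by rw [Real.norm_eq_abs, mul_assoc, abs_mul_abs_self, sq]

theorem abs_average_sub_midpoint_le (hf : ContDiff ℝ 2 f) {a b : ℝ} (hab : a ≤ b)
    (hL : ∀ t ∈ Icc a b, |iteratedDeriv 2 f t| ≤ L) :
    |(f b + f a) / 2 - f ((a + b) / 2)| ≤ L * (b - a) ^ 2 / 4 := by
  have hm : (a + b) / 2 ∈ Icc a b := ⟨by linarith, by linarith⟩
  have ha := abs_le.1 <| abs_sub_sub_deriv_mul_le hf (convex_Icc a b) hL hm (left_mem_Icc.2 hab)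
  have hb := abs_le.1 <| abs_sub_sub_deriv_mul_le hf (convex_Icc a b) hL hm (right_mem_Icc.2 hab)
  rw [abs_le]
  constructor <;> nlinarith [ha.1, ha.2, hb.1, hb.2]

theorem abs_integral_sub_mul_midpoint_le (hf : ContDiff ℝ 2 f) {a b : ℝ} (hab : a ≤ b)
    (hL : ∀ t ∈ Icc a b, |iteratedDeriv 2 f t| ≤ L) :
    |(∫ t in a..b, f t) - f ((a + b) / 2) * (b - a)| ≤ L * (b - a) ^ 3 / 4 := by
  set m := (a + b) / 2 with hm_def
  have hm : m ∈ Icc a b := ⟨by linarith, by linarith⟩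
  have hL0 : 0 ≤ L := (abs_nonneg _).trans (hL m hm)
  have hfc := hf.continuous
  -- the linear Taylor term integrates to zero about the midpoint
  have hlin : ∫ t in a..b, (f t - f m - deriv f m * (t - m)) =
      (∫ t in a..b, f t) - f m * (b - a) := by
    rw [intervalIntegral.integral_sub, intervalIntegral.integral_sub,
      intervalIntegral.integral_const_mul, intervalIntegral.integral_sub, integral_id]
    · simp only [intervalIntegral.integral_const, smul_eq_mul, hm_def]; ring
    all_goals exact Continuous.intervalIntegrable (by fun_prop) _ _
  rw [← hlin, ← Real.norm_eq_abs]
  calc _ ≤ L * ((b - a) / 2) ^ 2 * |b - a| := by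
        refine intervalIntegral.norm_integral_le_of_norm_le_const fun t ht => ?_
        rw [uIoc_of_le hab] at ht
        refine (abs_sub_sub_deriv_mul_le hf (convex_Icc a b) hL hm
          (Ioc_subset_Icc_self ht)).trans ?_
        exact mul_le_mul_of_nonneg_left (sq_le_sq' (by linarith [ht.1]) (by linarith [ht.2])) hL0
    _ = L * (b - a) ^ 3 / 4 := by rw [abs_of_nonneg (sub_nonneg.2 hab)]; ring

theorem abs_iteratedDeriv_two_mul_le {g : ℝ → ℝ} (hf : ContDiff ℝ 2 f) (hg : ContDiff ℝ 2 g)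
    {t M : ℝ} (hf0 : |f t| ≤ M) (hf1 : |deriv f t| ≤ M) (hf2 : |iteratedDeriv 2 f t| ≤ M)
    (hg0 : |g t| ≤ M) (hg1 : |deriv g t| ≤ M) (hg2 : |iteratedDeriv 2 g t| ≤ M) :
    |iteratedDeriv 2 (fun s => f s * g s) t| ≤ 4 * M ^ 2 := by
  have hM : 0 ≤ M := (abs_nonneg _).trans hf0
  have hleibniz : iteratedDeriv 2 (fun s => f s * g s) t =
      f t * iteratedDeriv 2 g t + 2 * deriv f t * deriv g t + iteratedDeriv 2 f t * g t := by
    rw [iteratedDeriv_fun_mul hf.contDiffAt hg.contDiffAt]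
    simp [Finset.sum_range_succ]
  rw [hleibniz]
  calc _ ≤ |f t| * |iteratedDeriv 2 g t| + 2 * (|deriv f t| * |deriv g t|)
        + |iteratedDeriv 2 f t| * |g t| := by
        refine (abs_add_le _ _).trans (add_le_add ((abs_add_le _ _).trans_eq ?_) (abs_mul _ _).le)
        simp only [mul_assoc, abs_mul, abs_two]
    _ ≤ M * M + 2 * (M * M) + M * M := by gcongr
    _ = 4 * M ^ 2 := by ring

end Calculus

section Quadrature

variable {A B : ℝ → ℝ} {M C : ℝ}

theorem abs_average_mul_sub_integral_mul_le (hA : ContDiff ℝ 2 A) (hB : ContDiff ℝ 2 B)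
    {a b y : ℝ} (hab : a ≤ b)
    (hAb : ∀ t ∈ Icc a b, |A t| ≤ M ∧ |deriv A t| ≤ M ∧ |iteratedDeriv 2 A t| ≤ M)
    (hBb : ∀ t ∈ Icc a b, |B t| ≤ M ∧ |deriv B t| ≤ M ∧ |iteratedDeriv 2 B t| ≤ M)
    (hy : |y - B ((a + b) / 2)| ≤ C * (b - a) ^ 2) :
    |(A b + A a) / 2 * y * (b - a) - ∫ t in a..b, A t * B t| ≤
      (M * C + 5 * M ^ 2 / 4) * (b - a) ^ 3 := by
  set m := (a + b) / 2 with hm_def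
  have hm : m ∈ Icc a b := ⟨by linarith, by linarith⟩
  have hba : 0 ≤ b - a := sub_nonneg.2 hab
  have hM : 0 ≤ M := (abs_nonneg _).trans (hAb m hm).1
  have hAavg : |(A b + A a) / 2| ≤ M := by
    have ha := abs_le.1 (hAb a (left_mem_Icc.2 hab)).1
    have hb := abs_le.1 (hAb b (right_mem_Icc.2 hab)).1
    exact abs_le.2 ⟨by linarith [ha.1, hb.1], by linarith [ha.2, hb.2]⟩
  have htrap := abs_average_sub_midpoint_le hA hab fun t ht => (hAb t ht).2.2
  have hmid := abs_integral_sub_mul_midpoint_le (hA.mul hB) hab fun t ht =>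
    abs_iteratedDeriv_two_mul_le hA hB (hAb t ht).1 (hAb t ht).2.1 (hAb t ht).2.2
      (hBb t ht).1 (hBb t ht).2.1 (hBb t ht).2.2
  rw [show (A b + A a) / 2 * y * (b - a) - ∫ t in a..b, A t * B t =
      (A b + A a) / 2 * (y - B m) * (b - a) + ((A b + A a) / 2 - A m) * B m * (b - a)
        - ((∫ t in a..b, A t * B t) - A m * B m * (b - a)) by ring]
  calc _ ≤ |(A b + A a) / 2| * |y - B m| * (b - a) + |(A b + A a) / 2 - A m| * |B m| * (b - a)
        + |(∫ t in a..b, A t * B t) - A m * B m * (b - a)| := by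
        refine (abs_sub _ _).trans (add_le_add ((abs_add_le _ _).trans_eq ?_) le_rfl)
        rw [abs_mul, abs_mul, abs_mul, abs_mul, abs_of_nonneg hba]
    _ ≤ M * (C * (b - a) ^ 2) * (b - a) + M * (b - a) ^ 2 / 4 * M * (b - a)
        + 4 * M ^ 2 * (b - a) ^ 3 / 4 := by
        gcongr
        exact (hBb m hm).1
    _ = (M * C + 5 * M ^ 2 / 4) * (b - a) ^ 3 := by ring

theorem abs_sum_average_mul_sub_integral_mul_le {Bt : ℕ → ℝ} {K : ℕ} (hK : 0 < K)
    (hA : ContDiff ℝ 2 A) (hB : ContDiff ℝ 2 B)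
    (hAb : ∀ t ∈ Icc (0 : ℝ) 1, |A t| ≤ M ∧ |deriv A t| ≤ M ∧ |iteratedDeriv 2 A t| ≤ M)
    (hBb : ∀ t ∈ Icc (0 : ℝ) 1, |B t| ≤ M ∧ |deriv B t| ≤ M ∧ |iteratedDeriv 2 B t| ≤ M)
    (hBt : ∀ k, 1 ≤ k → k ≤ K → |Bt k - B (((k : ℝ) - 1 / 2) / K)| ≤ C * (1 / K) ^ 2) :
    |∑ k ∈ Finset.range K, (A (((k + 1 : ℕ) : ℝ) / K) + A ((k : ℝ) / K)) / 2 * Bt (k + 1) * (1 / K)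
        - ∫ t in (0 : ℝ)..1, A t * B t| ≤ (M * C + 5 * M ^ 2 / 4) * (1 / K) ^ 2 := by
  have hK' : (0 : ℝ) < K := Nat.cast_pos.2 hK
  have hsplit : ∫ t in (0 : ℝ)..1, A t * B t =
      ∑ k ∈ Finset.range K, ∫ t in (k : ℝ) / K..((k + 1 : ℕ) : ℝ) / K, A t * B t := by
    rw [intervalIntegral.sum_integral_adjacent_intervals (f := fun t => A t * B t)
      (a := fun k : ℕ => (k : ℝ) / K) fun k _ => (hA.continuous.mul hB.continuous).intervalIntegrable _ _]
    simp [hK'.ne']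
  rw [hsplit, ← Finset.sum_sub_distrib]
  calc _ ≤ ∑ k ∈ Finset.range K, (M * C + 5 * M ^ 2 / 4) * (1 / K) ^ 3 := by
        refine (Finset.abs_sum_le_sum_abs _ _).trans (Finset.sum_le_sum fun k hk => ?_)
        have hk : k + 1 ≤ K := Finset.mem_range.1 hk
        have hstep : ((k + 1 : ℕ) : ℝ) / K - k / K = 1 / K := by push_cast; ring
        have hmid : (((k + 1 : ℕ) : ℝ) - 1 / 2) / K =
            ((k : ℝ) / K + ((k + 1 : ℕ) : ℝ) / K) / 2 := by
          push_cast; ring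
        have hsub : Icc ((k : ℝ) / K) (((k + 1 : ℕ) : ℝ) / K) ⊆ Icc 0 1 :=
          Icc_subset_Icc (by positivity) (div_le_one_of_le₀ (by exact_mod_cast hk) hK'.le)
        have := abs_average_mul_sub_integral_mul_le hA hB
          (by rw [← sub_nonneg, hstep]; positivity) (fun t ht => hAb t (hsub ht))
          (fun t ht => hBb t (hsub ht)) (by rw [hstep, ← hmid]; exact hBt (k + 1) (by omega) hk)
        rwa [hstep] at this
    _ = (M * C + 5 * M ^ 2 / 4) * (1 / K) ^ 2 := by
        rw [Finset.sum_const, Finset.card_range, nsmul_eq_mul]; field_simp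

end Quadrature

section Moments

variable {Ω : Type*} [MeasurableSpace Ω] {μ : Measure Ω}

theorem integral_abs_mul_le_sqrt_mul_sqrt {X Y : Ω → ℝ} (hX : MemLp X 2 μ) (hY : MemLp Y 2 μ) :
    ∫ ω, |X ω * Y ω| ∂μ ≤ √(∫ ω, X ω ^ 2 ∂μ) * √(∫ ω, Y ω ^ 2 ∂μ) := by
  have h := integral_mul_norm_le_Lp_mul_Lq Real.HolderConjugate.two_two
    (by simpa using hX) (by simpa using hY)
  simpa [Real.sqrt_eq_rpow, Real.norm_eq_abs, abs_mul] using h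

theorem integral_abs_le_sqrt [IsProbabilityMeasure μ] {Y : Ω → ℝ} (hY : MemLp Y 2 μ) :
    ∫ ω, |Y ω| ∂μ ≤ √(∫ ω, Y ω ^ 2 ∂μ) := by
  simpa using integral_abs_mul_le_sqrt_mul_sqrt (memLp_const (1 : ℝ)) hY

variable {X₁ X₂ Y : Ω → ℝ} {x₁ x₂ y : ℝ}

theorem integrable_average_mul [IsFiniteMeasure μ] (hX₁ : MemLp (fun ω => X₁ ω - x₁) 2 μ)
    (hX₂ : MemLp (fun ω => X₂ ω - x₂) 2 μ) (hY : MemLp Y 2 μ) :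
    Integrable (fun ω => (X₁ ω + X₂ ω) / 2 * Y ω) μ := by
  have hX : MemLp (fun ω => (X₁ ω + X₂ ω) / 2) 2 μ := by
    simpa [div_eq_inv_mul] using
      ((hX₁.add (memLp_const x₁)).add (hX₂.add (memLp_const x₂))).const_mul (2⁻¹ : ℝ)
  exact hX.integrable_mul hY

theorem integral_abs_average_mul_sub_le [IsProbabilityMeasure μ] {a b c M : ℝ}
    (hX₁ : MemLp (fun ω => X₁ ω - x₁) 2 μ) (hX₂ : MemLp (fun ω => X₂ ω - x₂) 2 μ)
    (hY : MemLp Y 2 μ) (ha₁ : ∫ ω, (X₁ ω - x₁) ^ 2 ∂μ ≤ a) (ha₂ : ∫ ω, (X₂ ω - x₂) ^ 2 ∂μ ≤ a)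
    (hb : ∫ ω, Y ω ^ 2 ∂μ ≤ b) (hc : ∫ ω, (Y ω - y) ^ 2 ∂μ ≤ c) (hx₁ : |x₁| ≤ M)
    (hx₂ : |x₂| ≤ M) :
    ∫ ω, |(X₁ ω + X₂ ω) / 2 * Y ω - (x₁ + x₂) / 2 * y| ∂μ ≤ √a * √b + M * √c := by
  have hYy : MemLp (fun ω => Y ω - y) 2 μ := hY.sub (memLp_const y)
  have hx : |(x₁ + x₂) / 2| ≤ M := by
    rw [abs_le] at *; constructor <;> linarith
  have hM : 0 ≤ M := (abs_nonneg _).trans hx₁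
  have hg₁ : Integrable (fun ω => |(X₁ ω - x₁) * Y ω|) μ := (hX₁.integrable_mul hY).abs
  have hg₂ : Integrable (fun ω => |(X₂ ω - x₂) * Y ω|) μ := (hX₂.integrable_mul hY).abs
  have hg₃ : Integrable (fun ω => |Y ω - y|) μ := (hYy.integrable one_le_two).abs
  have hg₁₂ : Integrable (fun ω => (|(X₁ ω - x₁) * Y ω| + |(X₂ ω - x₂) * Y ω|) / 2) μ :=
    (hg₁.add hg₂).div_const 2
  have hpt : ∀ ω, |(X₁ ω + X₂ ω) / 2 * Y ω - (x₁ + x₂) / 2 * y| ≤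
      (|(X₁ ω - x₁) * Y ω| + |(X₂ ω - x₂) * Y ω|) / 2 + M * |Y ω - y| := fun ω => by
    rw [show (X₁ ω + X₂ ω) / 2 * Y ω - (x₁ + x₂) / 2 * y =
      ((X₁ ω - x₁) * Y ω + (X₂ ω - x₂) * Y ω) / 2 + (x₁ + x₂) / 2 * (Y ω - y) by ring]
    refine (abs_add_le _ _).trans (add_le_add ?_ ?_)
    · rw [abs_div, abs_two]; gcongr; exact abs_add_le _ _
    · rw [abs_mul]; gcongr
  calc _ ≤ ∫ ω, (|(X₁ ω - x₁) * Y ω| + |(X₂ ω - x₂) * Y ω|) / 2 + M * |Y ω - y| ∂μ :=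
        integral_mono_of_nonneg (ae_of_all _ fun _ => abs_nonneg _)
          (hg₁₂.add (hg₃.const_mul M)) (ae_of_all _ hpt)
    _ = ((∫ ω, |(X₁ ω - x₁) * Y ω| ∂μ) + ∫ ω, |(X₂ ω - x₂) * Y ω| ∂μ) / 2
          + M * ∫ ω, |Y ω - y| ∂μ := by
        rw [integral_add hg₁₂ (hg₃.const_mul M), integral_div,
          integral_add hg₁ hg₂, integral_const_mul]
    _ ≤ (√a * √b + √a * √b) / 2 + M * √c := by
        gcongr
        · exact (integral_abs_mul_le_sqrt_mul_sqrt hX₁ hY).trans (by gcongr)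
        · exact (integral_abs_mul_le_sqrt_mul_sqrt hX₂ hY).trans (by gcongr)
        · exact (integral_abs_le_sqrt hYy).trans (Real.sqrt_le_sqrt hc)
    _ = √a * √b + M * √c := by ring

theorem integral_abs_sum_mul_sub_le [IsProbabilityMeasure μ] {ι : Type*} {s : Finset ι}
    {f : ι → Ω → ℝ} (hf : ∀ i ∈ s, Integrable (f i) μ) (d : ι → ℝ) {w : ℝ} (hw : 0 ≤ w)
    (c : ℝ) :
    ∫ ω, |∑ i ∈ s, f i ω * w - c| ∂μ ≤
      w * ∑ i ∈ s, ∫ ω, |f i ω - d i| ∂μ + |∑ i ∈ s, d i * w - c| := by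
  have hg : ∀ i ∈ s, Integrable (fun ω => |f i ω - d i|) μ := fun i hi =>
    ((hf i hi).sub (integrable_const _)).abs
  have hpt : ∀ ω, |∑ i ∈ s, f i ω * w - c| ≤
      w * ∑ i ∈ s, |f i ω - d i| + |∑ i ∈ s, d i * w - c| := fun ω => by
    calc _ = |(∑ i ∈ s, (f i ω - d i)) * w + (∑ i ∈ s, d i * w - c)| := by
          rw [Finset.sum_sub_distrib, ← Finset.sum_mul, ← Finset.sum_mul]; ring_nf
      _ ≤ w * ∑ i ∈ s, |f i ω - d i| + |∑ i ∈ s, d i * w - c| := by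
          refine (abs_add_le _ _).trans (add_le_add ?_ le_rfl)
          rw [abs_mul, abs_of_nonneg hw, mul_comm]
          gcongr
          exact Finset.abs_sum_le_sum_abs _ _
  calc _ ≤ ∫ ω, (w * ∑ i ∈ s, |f i ω - d i| + |∑ i ∈ s, d i * w - c|) ∂μ :=
        integral_mono_of_nonneg (ae_of_all _ fun _ => abs_nonneg _)
          (((integrable_finsetSum s hg).const_mul w).add (integrable_const _)) (ae_of_all _ hpt)
    _ = _ := by
        rw [integral_add ((integrable_finsetSum s hg).const_mul w) (integrable_const _),
          integral_const_mul, integral_finsetSum s hg]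
        simp

theorem integral_abs_sum_average_mul_sub_le [IsProbabilityMeasure μ] {X Y : ℕ → Ω → ℝ}
    {x y : ℕ → ℝ} {K : ℕ} {a b c M : ℝ} (hX : ∀ j ≤ K, MemLp (fun ω => X j ω - x j) 2 μ)
    (hY : ∀ k, 1 ≤ k → k ≤ K → MemLp (Y k) 2 μ) (ha : ∀ j ≤ K, ∫ ω, (X j ω - x j) ^ 2 ∂μ ≤ a)
    (hb : ∀ k, 1 ≤ k → k ≤ K → ∫ ω, Y k ω ^ 2 ∂μ ≤ b)
    (hc : ∀ k, 1 ≤ k → k ≤ K → ∫ ω, (Y k ω - y k) ^ 2 ∂μ ≤ c) (hx : ∀ j ≤ K, |x j| ≤ M)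
    {w : ℝ} (hw : 0 ≤ w) (z : ℝ) :
    ∫ ω, |∑ k ∈ Finset.range K, (X (k + 1) ω + X k ω) / 2 * Y (k + 1) ω * w - z| ∂μ ≤
      w * (K * (√a * √b + M * √c))
        + |∑ k ∈ Finset.range K, (x (k + 1) + x k) / 2 * y (k + 1) * w - z| := by
  calc _ ≤ w * ∑ k ∈ Finset.range K, ∫ ω, |(X (k + 1) ω + X k ω) / 2 * Y (k + 1) ω
          - (x (k + 1) + x k) / 2 * y (k + 1)| ∂μ
        + |∑ k ∈ Finset.range K, (x (k + 1) + x k) / 2 * y (k + 1) * w - z| := by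
        refine integral_abs_sum_mul_sub_le (fun k hk => ?_) _ hw z
        have hk : k + 1 ≤ K := Finset.mem_range.1 hk
        exact integrable_average_mul (hX (k + 1) hk) (hX k (by omega)) (hY (k + 1) (by omega) hk)
    _ ≤ w * ∑ _k ∈ Finset.range K, (√a * √b + M * √c)
        + |∑ k ∈ Finset.range K, (x (k + 1) + x k) / 2 * y (k + 1) * w - z| := by
        gcongr with k hk
        have hk : k + 1 ≤ K := Finset.mem_range.1 hk
        exact integral_abs_average_mul_sub_le (hX (k + 1) hk) (hX k (by omega))
          (hY (k + 1) (by omega) hk) (ha (k + 1) hk) (ha k (by omega)) (hb (k + 1) (by omega) hk)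
          (hc (k + 1) (by omega) hk) (hx (k + 1) hk) (hx k (by omega))
    _ = _ := by rw [Finset.sum_const, Finset.card_range, nsmul_eq_mul]

end Moments

/-- Consistency of the discrete geometric objective (abstract form): the discrete
Monte Carlo midpoint-type sum approximates `∫₀¹ A B` with error
`O(K⁻²) + O(N^{−1/2})`, with a constant depending only on the regularity and moment
bounds `M, C_A, C_B, C`. -/
theorem discrete_geometric_objective_consistency
    {Ω : Type*} [MeasurableSpace Ω] (μ : Measure Ω) [IsProbabilityMeasure μ]
    (M C_A C_B C : ℝ) (hM : 0 ≤ M) (hCA : 0 ≤ C_A) (hCB : 0 ≤ C_B) (hC : 0 ≤ C) :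
    ∃ C' : ℝ, 0 < C' ∧
      ∀ (K N : ℕ), 0 < K → 0 < N →
      ∀ (A B : ℝ → ℝ) (Ah Bh : ℕ → Ω → ℝ) (Bt : ℕ → ℝ),
        ContDiff ℝ 2 A → ContDiff ℝ 2 B →
        (∀ τ ∈ Set.Icc (0:ℝ) 1,
          |A τ| ≤ M ∧ |deriv A τ| ≤ M ∧ |iteratedDeriv 2 A τ| ≤ M) →
        (∀ τ ∈ Set.Icc (0:ℝ) 1,
          |B τ| ≤ M ∧ |deriv B τ| ≤ M ∧ |iteratedDeriv 2 B τ| ≤ M) →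
        (∀ j, Measurable (Ah j)) → (∀ k, Measurable (Bh k)) →
        (∀ j ≤ K, Integrable (fun ω => |Ah j ω - A ((j : ℝ) / K)| ^ 2) μ) →
        (∀ j ≤ K, (∫ ω, |Ah j ω - A ((j : ℝ) / K)| ^ 2 ∂μ) ≤ C_A ^ 2 / N) →
        (∀ k, 1 ≤ k → k ≤ K → Integrable (fun ω => |Bh k ω - Bt k| ^ 2) μ) →
        (∀ k, 1 ≤ k → k ≤ K → (∫ ω, |Bh k ω - Bt k| ^ 2 ∂μ) ≤ C_B ^ 2 / N) →
        (∀ k, 1 ≤ k → k ≤ K →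
          |Bt k - B (((k : ℝ) - 1 / 2) / K)| ≤ C * (1 / K) ^ 2) →
        (∀ j ≤ K, Integrable (fun ω => (Ah j ω) ^ 2) μ) →
        (∀ j ≤ K, (∫ ω, (Ah j ω) ^ 2 ∂μ) ≤ C) →
        (∀ k, 1 ≤ k → k ≤ K → Integrable (fun ω => (Bh k ω) ^ 2) μ) →
        (∀ k, 1 ≤ k → k ≤ K → (∫ ω, (Bh k ω) ^ 2 ∂μ) ≤ C) →
        (∫ ω, |(∑ k ∈ Finset.range K,
              ((Ah (k + 1) ω + Ah k ω) / 2) * Bh (k + 1) ω * (1 / K))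
            - ∫ τ in (0:ℝ)..1, A τ * B τ| ∂μ)
          ≤ C' * ((1 / (K : ℝ)) ^ 2 + 1 / Real.sqrt N) := by
  refine ⟨C_A * √C + M * C_B + (M * C + 5 * M ^ 2 / 4) + 1, by positivity, ?_⟩
  intro K N hK _ A B Ah Bh Bt hA hB hAb hBb hAm hBm hAi hAe _ hBe hBt _ _ hBi hBs
  have hX : ∀ j ≤ K, MemLp (fun ω => Ah j ω - A (j / K)) 2 μ := fun j hj =>
    (memLp_two_iff_integrable_sq_norm ((hAm j).sub_const _).aestronglyMeasurable).2 (hAi j hj)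
  have hY : ∀ k, 1 ≤ k → k ≤ K → MemLp (Bh k) 2 μ := fun k hk₁ hk₂ =>
    (memLp_two_iff_integrable_sq (hBm k).aestronglyMeasurable).2 (hBi k hk₁ hk₂)
  have hstoch := integral_abs_sum_average_mul_sub_le hX hY
    (fun j hj => by simpa only [sq_abs] using hAe j hj) hBs
    (fun k hk₁ hk₂ => by simpa only [sq_abs] using hBe k hk₁ hk₂)
    (fun j hj => (hAb _ ⟨by positivity, div_le_one_of_le₀ (by exact_mod_cast hj) K.cast_nonneg⟩).1)
    (w := 1 / K) (by positivity) (∫ t in (0 : ℝ)..1, A t * B t)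
  have hdet := abs_sum_average_mul_sub_integral_mul_le hK hA hB hAb hBb hBt
  calc _ ≤ 1 / K * (K * (√(C_A ^ 2 / N) * √C + M * √(C_B ^ 2 / N)))
        + (M * C + 5 * M ^ 2 / 4) * (1 / K) ^ 2 := hstoch.trans (add_le_add le_rfl hdet)
    _ = (C_A * √C + M * C_B) * (1 / √N) + (M * C + 5 * M ^ 2 / 4) * (1 / K) ^ 2 := by
        rw [Real.sqrt_div' _ N.cast_nonneg, Real.sqrt_div' _ N.cast_nonneg, Real.sqrt_sq hCA,
          Real.sqrt_sq hCB]
        field_simp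
    _ ≤ _ := by
        have hs : 0 ≤ C_A * √C + M * C_B := by positivity
        have hD : 0 ≤ M * C + 5 * M ^ 2 / 4 := by positivity
        have hh : 0 ≤ (1 / (K : ℝ)) ^ 2 := by positivity
        have hr : 0 ≤ 1 / √(N : ℝ) := by positivity
        nlinarith [mul_nonneg hs hh, mul_nonneg hD hr]
end
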